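/- For each index 1 ≤ i ≤ N, writing S_i = {n_1 < n_2 < … < n_k}, the iterated Lie bracket [⋯[[D_0, D_{n_1}], D_{n_2}], …, D_{n_k}] equals the constant vector field φ ↦ λ (μ/√2)^k · e_i on ℝ^N, where e_i is the i-th standard basis vector of ℝ^N. -/

import Mathlib

open scoped BigOperators

noncomputable section

/-- Vector fields on `ℝ^N`. -/
abbrev VF (N : ℕ) := (Fin N → ℝ) → Fin N → ℝ

/-- The Lie bracket `[V,W](φ) = DW(φ)(V(φ)) − DV(φ)(W(φ))` of vector fields. -/
def lieBracket {N : ℕ} (V W : VF N) : VF N :=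
  fun φ => fderiv ℝ W φ (V φ) - fderiv ℝ V φ (W φ)

/-- The drift vector field `D₀`. -/
def Dfield0 {N : ℕ} (lam μ : ℝ) (k : ℕ) : VF N :=
  fun φ i => (lam - (k : ℝ) * μ ^ 2 / 2) * φ i + lam

/-- The diffusion vector fields `D_j`, `1 ≤ j ≤ n`. -/
def DfieldJ {n N : ℕ} (μ : ℝ) (S : Fin N → Finset (Fin n)) (j : Fin n) : VF N :=
  fun φ i => (μ / Real.sqrt 2) * (φ i * if j ∈ S i then 1 else 0)

/-!
`D₀` is affine with scalar linear part and every `D_j` is linear, so `[D₀, D_j]` is the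
constant field `D_j(λ𝟙)`, and bracketing a constant field `v` with a linear field `L` gives the
constant field `L v`. Hence the iterated bracket is the constant `D_{n_k} ⋯ D_{n_1} (λ𝟙)`. The
`D_j` are diagonal, so its `m`-th coordinate is `λ (μ/√2)^k` if `S_i ⊆ S_m` and `0` otherwise,
and `S_i ⊆ S_m` forces `m = i` because the `S_m` are distinct `k`-sets.
-/

section LinearFields

variable {N : ℕ}

theorem lieBracket_const_clm (v : Fin N → ℝ) (L : (Fin N → ℝ) →L[ℝ] (Fin N → ℝ)) :
    lieBracket (fun _ => v) L = fun _ => L v := by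
  funext φ
  simp [lieBracket, L.fderiv]

theorem lieBracket_smul_add_const_clm (a : ℝ) (v : Fin N → ℝ)
    (L : (Fin N → ℝ) →L[ℝ] (Fin N → ℝ)) :
    lieBracket (fun φ => a • φ + v) L = fun _ => L v := by
  funext φ
  have hV : fderiv ℝ (fun φ : Fin N → ℝ => a • φ + v) φ = a • ContinuousLinearMap.id ℝ _ :=
    ((a • ContinuousLinearMap.id ℝ _).hasFDerivAt.add_const v).fderiv
  simp [lieBracket, L.fderiv, hV]

theorem foldl_lieBracket_const_clm {ι : Type*} (L : ι → (Fin N → ℝ) →L[ℝ] (Fin N → ℝ))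
    (l : List ι) (v : Fin N → ℝ) :
    l.foldl (fun V j => lieBracket V (L j)) (fun _ => v) =
      fun _ => l.foldl (fun w j => L j w) v := by
  induction l generalizing v with
  | nil => rfl
  | cons j l ih => simp only [List.foldl_cons, lieBracket_const_clm, ih]

theorem foldl_lieBracket_smul_add_const_clm {ι : Type*}
    (L : ι → (Fin N → ℝ) →L[ℝ] (Fin N → ℝ)) (a : ℝ) (v : Fin N → ℝ) {l : List ι}
    (hl : l ≠ []) :
    l.foldl (fun V j => lieBracket V (L j)) (fun φ => a • φ + v) =
      fun _ => l.foldl (fun w j => L j w) v := by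
  obtain ⟨j, l, rfl⟩ := List.exists_cons_of_ne_nil hl
  simp only [List.foldl_cons, lieBracket_smul_add_const_clm, foldl_lieBracket_const_clm]

end LinearFields

theorem Dfield0_eq_smul_add_const {N : ℕ} (lam μ : ℝ) (k : ℕ) :
    (Dfield0 lam μ k : VF N) = fun φ => (lam - k * μ ^ 2 / 2) • φ + fun _ => lam := by
  funext φ i
  simp [Dfield0]

section Diffusion

variable {n N : ℕ} (μ : ℝ) (S : Fin N → Finset (Fin n))

def DfieldJCLM (j : Fin n) : (Fin N → ℝ) →L[ℝ] (Fin N → ℝ) :=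
  ContinuousLinearMap.pi fun i =>
    (μ / Real.sqrt 2 * if j ∈ S i then 1 else 0) • ContinuousLinearMap.proj i

@[simp]
theorem coe_DfieldJCLM (j : Fin n) : ⇑(DfieldJCLM μ S j) = DfieldJ μ S j := by
  funext φ i
  simp only [DfieldJCLM, DfieldJ, ContinuousLinearMap.pi_apply, smul_apply,
    ContinuousLinearMap.proj_apply, smul_eq_mul]
  ring

theorem foldl_DfieldJ_apply (l : List (Fin n)) (v : Fin N → ℝ) (m : Fin N) :
    l.foldl (fun w j => DfieldJ μ S j w) v m =
      if ∀ j ∈ l, j ∈ S m then (μ / Real.sqrt 2) ^ l.length * v m else 0 := by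
  induction l generalizing v with
  | nil => simp
  | cons j l ih =>
    rw [List.foldl_cons, ih]
    by_cases hj : j ∈ S m <;> simp [DfieldJ, hj, pow_succ, mul_assoc]

end Diffusion

theorem subset_iff_eq_of_injective_of_card_eq {α β : Type*} {S : α → Finset β}
    (hS : Function.Injective S) {k : ℕ} (hcard : ∀ i, (S i).card = k) {i m : α} :
    S i ⊆ S m ↔ m = i := by
  refine ⟨fun h => hS (Finset.eq_of_subset_of_card_le h (by rw [hcard, hcard])).symm, ?_⟩
  rintro rfl
  exact subset_rfl

theorem iterated_lie_bracket_eq_basis_vector_general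
    (n k N : ℕ) (hk : 1 ≤ k)
    (S : Fin N → Finset (Fin n)) (hSinj : Function.Injective S)
    (hScard : ∀ i, (S i).card = k)
    (μ lam : ℝ) (i : Fin N) :
    ((S i).sort (· ≤ ·)).foldl (fun V j => lieBracket V (DfieldJ μ S j))
        (Dfield0 lam μ k) =
      fun _ : Fin N → ℝ =>
        (lam * (μ / Real.sqrt 2) ^ k) • (Pi.single i 1 : Fin N → ℝ) := by
  have hlen : ((S i).sort (· ≤ ·)).length = k := by rw [Finset.length_sort, hScard]
  have hne : (S i).sort (· ≤ ·) ≠ [] := List.ne_nil_of_length_pos (by omega)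
  have hfold := foldl_lieBracket_smul_add_const_clm (DfieldJCLM μ S) (lam - k * μ ^ 2 / 2)
    (fun _ => lam) hne
  simp only [coe_DfieldJCLM] at hfold
  rw [Dfield0_eq_smul_add_const, hfold]
  funext φ m
  rw [foldl_DfieldJ_apply, hlen]
  simp only [Finset.mem_sort, ← Finset.subset_iff,
    subset_iff_eq_of_injective_of_card_eq hSinj hScard, Pi.smul_apply, Pi.single_apply,
    smul_eq_mul]
  split_ifs <;> ring

theorem iterated_lie_bracket_eq_basis_vector
    (n k N : ℕ) (hk : 1 ≤ k) (hkn : k < n) (hN : N = n.choose k)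
    (S : Fin N → Finset (Fin n)) (hSinj : Function.Injective S)
    (hScard : ∀ i, (S i).card = k)
    (μ lam : ℝ) (hμ : μ ≠ 0) (hlam : 0 < lam) (i : Fin N) :
    ((S i).sort (· ≤ ·)).foldl (fun V j => lieBracket V (DfieldJ μ S j))
        (Dfield0 lam μ k) =
      fun _ : Fin N → ℝ =>
        (lam * (μ / Real.sqrt 2) ^ k) • (Pi.single i 1 : Fin N → ℝ) :=
  iterated_lie_bracket_eq_basis_vector_general n k N hk S hSinj hScard μ lam i

end
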